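/- arXiv:1011.1295 — 2 statements merged into one kernel-verified Lean document; each statement's English description precedes it below -/
import Mathlib

section
/- Bell's inequality: Let Ω be a finite set, q : Ω → ℝ a function with ∑_ω q(ω) = 1, and X, Y, Z : Ω → {-1, +1} information functions. Suppose X, Y, Z are jointly observable in q, i.e., for every (x,y,z) ∈ {-1,1}³ the sum p(x,y,z) = ∑_{ω : X(ω)=x, Y(ω)=y, Z(ω)=z} q(ω) is nonnegative. Then |E_q(XY) - E_q(YZ)| ≤ 1 - E_q(XZ), where E_q(UV) = ∑_ω U(ω)V(ω)q(ω). -/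
open Finset
open scoped Classical

lemma bell_aux (x y z P : ℝ) (hx : x = -1 ∨ x = 1) (hy : y = -1 ∨ y = 1)
    (hz : z = -1 ∨ z = 1) (hP : 0 ≤ P) :
    |x * y * (1 - x * z) * P| ≤ (1 - x * z) * P := by
  rcases hx with hx | hx <;> rcases hy with hy | hy <;> rcases hz with hz | hz <;>
    subst hx <;> subst hy <;> subst hz <;> rw [abs_le] <;>
    constructor <;> nlinarith [hP]

theorem stmt1 {Ω : Type*} [Fintype Ω] (q X Y Z : Ω → ℝ)
    (hq : ∑ ω, q ω = 1)
    (hX : ∀ ω, X ω = -1 ∨ X ω = 1)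
    (hY : ∀ ω, Y ω = -1 ∨ Y ω = 1)
    (hZ : ∀ ω, Z ω = -1 ∨ Z ω = 1)
    (hjoint : ∀ x y z : ℝ,
      0 ≤ ∑ ω ∈ Finset.univ.filter (fun ω => X ω = x ∧ Y ω = y ∧ Z ω = z), q ω) :
    |(∑ ω, X ω * Y ω * q ω) - ∑ ω, Y ω * Z ω * q ω| ≤ 1 - ∑ ω, X ω * Z ω * q ω := by
  classical
  set T : Finset (ℝ × ℝ × ℝ) :=
    ({-1, 1} : Finset ℝ) ×ˢ (({-1, 1} : Finset ℝ) ×ˢ ({-1, 1} : Finset ℝ)) with hT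
  set key : Ω → ℝ × ℝ × ℝ := fun ω => (X ω, Y ω, Z ω) with hkey
  have hmaps : ∀ ω ∈ (univ : Finset Ω), key ω ∈ T := by
    intro ω _
    simp only [hT, hkey, mem_product, mem_insert, mem_singleton]
    exact ⟨hX ω, hY ω, hZ ω⟩
  have fiber : ∀ f : Ω → ℝ,
      ∑ ω, f ω = ∑ t ∈ T, ∑ ω ∈ univ.filter (fun ω => key ω = t), f ω :=
    fun f => (Finset.sum_fiberwise_of_maps_to hmaps f).symm
  set P : ℝ × ℝ × ℝ → ℝ := fun t => ∑ ω ∈ univ.filter (fun ω => key ω = t), q ω with hPdef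
  have hP : ∀ t, 0 ≤ P t := by
    rintro ⟨x, y, z⟩
    have := hjoint x y z
    convert this using 2
    ext ω
    simp [hkey, Prod.ext_iff]
  have hval : ∀ t, ∀ ω ∈ univ.filter (fun ω => key ω = t),
      X ω = t.1 ∧ Y ω = t.2.1 ∧ Z ω = t.2.2 := by
    rintro ⟨x, y, z⟩ ω hω
    simp only [mem_filter, hkey, Prod.ext_iff] at hω
    exact hω.2
  have h1 : (∑ ω, X ω * Y ω * q ω) - ∑ ω, Y ω * Z ω * q ω
      = ∑ t ∈ T, t.1 * t.2.1 * (1 - t.1 * t.2.2) * P t := by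
    rw [← Finset.sum_sub_distrib]
    have e1 : ∀ ω, X ω * Y ω * q ω - Y ω * Z ω * q ω
        = X ω * Y ω * (1 - X ω * Z ω) * q ω := by
      intro ω; rcases hX ω with h | h <;> rw [h] <;> ring
    rw [Finset.sum_congr rfl (fun ω _ => e1 ω),
      fiber (fun ω => X ω * Y ω * (1 - X ω * Z ω) * q ω)]
    refine Finset.sum_congr rfl fun t ht => ?_
    rw [hPdef, Finset.mul_sum]
    refine Finset.sum_congr rfl fun ω hω => ?_
    obtain ⟨hx, hy, hz⟩ := hval t ω hω
    rw [hx, hy, hz]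
  have h2 : 1 - ∑ ω, X ω * Z ω * q ω = ∑ t ∈ T, (1 - t.1 * t.2.2) * P t := by
    have e0 : (1 : ℝ) - ∑ ω, X ω * Z ω * q ω = ∑ ω, (1 - X ω * Z ω) * q ω := by
      have e1 : ∀ ω, (1 - X ω * Z ω) * q ω = q ω - X ω * Z ω * q ω := fun ω => by ring
      rw [Finset.sum_congr rfl fun ω _ => e1 ω, Finset.sum_sub_distrib, hq]
    rw [e0, fiber (fun ω => (1 - X ω * Z ω) * q ω)]
    refine Finset.sum_congr rfl fun t ht => ?_
    rw [hPdef, Finset.mul_sum]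
    refine Finset.sum_congr rfl fun ω hω => ?_
    obtain ⟨hx, hy, hz⟩ := hval t ω hω
    rw [hx, hz]
  rw [h1, h2]
  refine le_trans (Finset.abs_sum_le_sum_abs _ _) (Finset.sum_le_sum fun t ht => ?_)
  obtain ⟨x, y, z⟩ := t
  simp only [hT, mem_product, mem_insert, mem_singleton] at ht
  obtain ⟨hx, hy, hz⟩ := ht
  exact bell_aux x y z (P (x, y, z)) hx hy hz (hP (x, y, z))
end

section
/- Let μ : H_n → H_n be a trace-preserving linear operator (a Markovian) and P a Markov density such that the chain (μ, P) is bounded, i.e., there exists c with tr(μ^t(P)²) ≤ c for all t ≥ 0. Then the Cesàro limit P̃ = lim_{t→∞} (1/t)∑_{k=0}^{t-1} μ^k(P) exists, tr(P̃) = 1, and μ(P̃) = P̃. -/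
/-!
Write `W` for the subspace of vectors whose `μ`-orbit is bounded; it is `μ`-invariant, finite
dimensional and contains `P`. On `W`, if `μ x = x` and `x = μ y - y` then `μ^t y = y + t x`, so
boundedness forces `x = 0`: the fixed space and the range of `μ - 1` are disjoint, hence
complementary by rank-nullity. Writing `P = Q + (μ R - R)` with `μ Q = Q`, the Cesàro means are
`Q + (μ^t R - R) / t → Q`. The trace is continuous and `μ`-invariant, so it passes to the limit.
-/

open scoped ComplexOrder

open Filter Finset

/-- The real vector space of Hermitian `n × n` complex matrices. -/
noncomputable abbrev HermMat (n : ℕ) := selfAdjoint (Matrix (Fin n) (Fin n) ℂ)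

open Function Bornology Topology

theorem map_eq_of_tendsto_birkhoffAverage {R α M N : Type*} [DivisionSemiring R] [CharZero R]
    [AddCommMonoid M] [Module R M] [TopologicalSpace M] [AddCommMonoid N] [Module R N]
    [TopologicalSpace N] [T2Space N] {f : α → α} {g : α → M} {x : α} {y : M}
    (φ : M →+ N) (hφ : Continuous φ) (hinv : φ ∘ g ∘ f = φ ∘ g)
    (h : Tendsto (birkhoffAverage R f g · x) atTop (𝓝 y)) : φ y = φ (g x) := by
  have hconst : ∀ᶠ n in atTop, φ (g x) = φ (birkhoffAverage R f g n x) := by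
    filter_upwards [eventually_ne_atTop 0] with n hn
    rw [map_birkhoffAverage R R, birkhoffAverage_of_comp_eq R hinv (Nat.cast_ne_zero.2 hn)]
    rfl
  exact tendsto_nhds_unique ((hφ.tendsto y).comp h) (tendsto_const_nhds.congr' hconst)

section BoundedOrbit

variable {𝕜 E : Type*} [RCLike 𝕜] [NormedAddCommGroup E] [NormedSpace 𝕜 E] (T : E →ₗ[𝕜] E)

theorem LinearMap.birkhoffAverage_id_apply (n : ℕ) (x : E) :
    birkhoffAverage 𝕜 T _root_.id n x = (n : 𝕜)⁻¹ • ∑ k ∈ Finset.range n, (T ^ k) x := by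
  simp [birkhoffAverage, birkhoffSum, Module.End.coe_pow]

theorem LinearMap.pow_apply_eq_add_nsmul {x y : E} (hx : T x = x) (hy : T y = y + x) (k : ℕ) :
    (T ^ k) y = y + k • x := by
  induction k with
  | zero => simp
  | succ k ih =>
    rw [pow_succ', Module.End.mul_apply, ih, map_add, hy, map_nsmul, hx, succ_nsmul', add_assoc]

theorem LinearMap.eq_zero_of_apply_eq_add_of_isBounded {x y : E} (hx : T x = x)
    (hy : T y = y + x) (hb : IsBounded (Set.range fun k : ℕ => (T ^ k) y)) : x = 0 := by
  obtain ⟨C, hC⟩ := isBounded_iff_forall_norm_le.1 hb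
  by_contra hne
  obtain ⟨k, hk⟩ := exists_nat_gt ((C + ‖y‖) / ‖x‖)
  have hle : k * ‖x‖ ≤ C + ‖y‖ := calc
    k * ‖x‖ = ‖(T ^ k) y - y‖ := by
      rw [T.pow_apply_eq_add_nsmul hx hy, add_sub_cancel_left, RCLike.norm_nsmul 𝕜, nsmul_eq_mul]
    _ ≤ ‖(T ^ k) y‖ + ‖y‖ := norm_sub_le _ _
    _ ≤ C + ‖y‖ := by gcongr; exact hC _ (Set.mem_range_self k)
  rw [div_lt_iff₀ (norm_pos_iff.2 hne)] at hk
  linarith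

theorem LinearMap.disjoint_ker_range_sub_one
    (hT : ∀ v, IsBounded (Set.range fun k : ℕ => (T ^ k) v)) :
    Disjoint (LinearMap.ker (T - 1)) (LinearMap.range (T - 1)) := by
  rw [Submodule.disjoint_def]
  rintro x hx ⟨y, rfl⟩
  exact T.eq_zero_of_apply_eq_add_of_isBounded (sub_eq_zero.1 hx) (by simp) (hT y)

theorem LinearMap.isCompl_ker_range_sub_one [FiniteDimensional 𝕜 E]
    (hT : ∀ v, IsBounded (Set.range fun k : ℕ => (T ^ k) v)) :
    IsCompl (LinearMap.ker (T - 1)) (LinearMap.range (T - 1)) := by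
  refine (Submodule.isCompl_iff_disjoint _ _ ?_).2 (T.disjoint_ker_range_sub_one hT)
  rw [← (T - 1).finrank_range_add_finrank_ker, add_comm]

theorem LinearMap.exists_isFixedPt_tendsto_birkhoffAverage_of_forall [FiniteDimensional 𝕜 E]
    (hT : ∀ v, IsBounded (Set.range fun k : ℕ => (T ^ k) v)) (x : E) :
    ∃ y, IsFixedPt T y ∧ Tendsto (birkhoffAverage 𝕜 T _root_.id · x) atTop (𝓝 y) := by
  obtain ⟨y, hy, _, ⟨r, rfl⟩, rfl⟩ :=
    Submodule.mem_sup.1 ((T.isCompl_ker_range_sub_one hT).sup_eq_top ▸ Submodule.mem_top (x := x))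
  have hfix : IsFixedPt T y := sub_eq_zero.1 hy
  have hsplit : ∀ n, birkhoffAverage 𝕜 T _root_.id n (y + (T - 1) r) =
      birkhoffAverage 𝕜 T _root_.id n y +
        (birkhoffAverage 𝕜 T _root_.id n (T r) - birkhoffAverage 𝕜 T _root_.id n r) := by
    intro n
    simp only [T.birkhoffAverage_id_apply, LinearMap.sub_apply, Module.End.one_apply, map_add,
      map_sub, sum_add_distrib, sum_sub_distrib, smul_add, smul_sub]
  have hbdd : IsBounded (Set.range fun k : ℕ => T^[k] r) := by
    simpa only [Module.End.coe_pow] using hT r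
  have hlim := (hfix.tendsto_birkhoffAverage 𝕜 _root_.id).add
    (tendsto_birkhoffAverage_apply_sub_birkhoffAverage 𝕜 (g := _root_.id) hbdd)
  rw [add_zero] at hlim
  exact ⟨y, hfix, hlim.congr fun n => (hsplit n).symm⟩

def LinearMap.boundedOrbitSubmodule : Submodule 𝕜 E where
  carrier := {v | IsBounded (Set.range fun k : ℕ => (T ^ k) v)}
  zero_mem' := by simp
  add_mem' {u v} hu hv := (hu.add hv).subset <| Set.range_subset_iff.2 fun k => by
    rw [map_add]; exact Set.add_mem_add (Set.mem_range_self k) (Set.mem_range_self k)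
  smul_mem' a v hv := (hv.smul₀ a).subset <| Set.range_subset_iff.2 fun k => by
    rw [map_smul]; exact Set.smul_mem_smul_set (Set.mem_range_self k)

theorem LinearMap.apply_mem_boundedOrbitSubmodule {v : E} (hv : v ∈ T.boundedOrbitSubmodule) :
    T v ∈ T.boundedOrbitSubmodule :=
  hv.subset <| Set.range_subset_iff.2 fun k =>
    ⟨k + 1, by simp only [pow_succ, Module.End.mul_apply]⟩

theorem LinearMap.exists_isFixedPt_tendsto_birkhoffAverage [FiniteDimensional 𝕜 E] {x : E}
    (hx : IsBounded (Set.range fun k : ℕ => (T ^ k) x)) :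
    ∃ y, IsFixedPt T y ∧ Tendsto (birkhoffAverage 𝕜 T _root_.id · x) atTop (𝓝 y) := by
  set S := T.restrict fun _ => T.apply_mem_boundedOrbitSubmodule
  have hS : ∀ k (w : T.boundedOrbitSubmodule), ((S ^ k) w : E) = (T ^ k) w := fun k w => by
    rw [Module.End.pow_restrict]; rfl
  have hSbdd : ∀ w, IsBounded (Set.range fun k : ℕ => (S ^ k) w) := fun w => by
    obtain ⟨C, hC⟩ := isBounded_iff_forall_norm_le.1 w.2
    refine isBounded_iff_forall_norm_le.2 ⟨C, Set.forall_mem_range.2 fun k => ?_⟩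
    rw [Submodule.coe_norm, hS]
    exact hC _ (Set.mem_range_self k)
  obtain ⟨y, hy, hlim⟩ := S.exists_isFixedPt_tendsto_birkhoffAverage_of_forall hSbdd ⟨x, hx⟩
  refine ⟨y, congrArg Subtype.val hy, ?_⟩
  convert (continuous_subtype_val.tendsto y).comp hlim using 2 with n
  simp [LinearMap.birkhoffAverage_id_apply, hS]

end BoundedOrbit

-- The Frobenius norm, so that `tr (A * A) = ‖A‖ ^ 2` for Hermitian `A`; its topology is
-- definitionally the entrywise one in which the Cesàro limit is stated.
attribute [local instance] Matrix.frobeniusNormedAddCommGroup Matrix.frobeniusNormedSpace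

theorem Matrix.IsHermitian.trace_mul_self_eq_frobenius_norm_sq {𝕜 ι : Type*} [RCLike 𝕜]
    [Fintype ι] {A : Matrix ι ι 𝕜} (hA : A.IsHermitian) :
    (A * A).trace = ((‖A‖ ^ 2 : ℝ) : 𝕜) := by
  rw [Matrix.frobenius_norm_def, ← Real.sqrt_eq_rpow, Real.sq_sqrt (by positivity)]
  simp only [Matrix.trace, Matrix.diag, Matrix.mul_apply, RCLike.ofReal_sum]
  refine sum_congr rfl fun i _ => sum_congr rfl fun j _ => ?_
  rw [← hA.apply j i, RCLike.star_def, RCLike.mul_conj]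
  norm_cast

noncomputable instance (n : ℕ) : NormedSpace ℝ (HermMat n) where
  norm_smul_le a A := norm_smul_le a (A : Matrix (Fin n) (Fin n) ℂ)

instance (n : ℕ) : FiniteDimensional ℝ (HermMat n) :=
  .of_injective ({ toFun := Subtype.val, map_add' := fun _ _ => rfl, map_smul' := fun _ _ => rfl } :
    HermMat n →ₗ[ℝ] Matrix (Fin n) (Fin n) ℂ) Subtype.val_injective

theorem stmt10 {n : ℕ} (μ : HermMat n →ₗ[ℝ] HermMat n)
    (hMarkov : ∀ A : HermMat n,
      ((μ A : Matrix (Fin n) (Fin n) ℂ)).trace = (A : Matrix (Fin n) (Fin n) ℂ).trace)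
    (P : HermMat n) (hP : (P : Matrix (Fin n) (Fin n) ℂ).trace = 1)
    (hbdd : ∃ c : ℝ, ∀ t : ℕ,
      (((μ ^ t) P : Matrix (Fin n) (Fin n) ℂ) * ((μ ^ t) P : Matrix (Fin n) (Fin n) ℂ)).trace
        ≤ (c : ℂ)) :
    ∃ Pt : HermMat n,
      Tendsto (fun t : ℕ => (t : ℝ)⁻¹ • ∑ k ∈ Finset.range t, (μ ^ k) P) atTop (nhds Pt) ∧
      (Pt : Matrix (Fin n) (Fin n) ℂ).trace = 1 ∧ μ Pt = Pt := by
  obtain ⟨c, hc⟩ := hbdd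
  have hbounded : IsBounded (Set.range fun t : ℕ => (μ ^ t) P) := by
    refine isBounded_iff_forall_norm_le.2 ⟨√c, Set.forall_mem_range.2 fun t => ?_⟩
    have hsq := hc t
    rw [Matrix.IsHermitian.trace_mul_self_eq_frobenius_norm_sq ((μ ^ t) P).2] at hsq
    exact Real.le_sqrt_of_sq_le (Complex.real_le_real.1 hsq)
  obtain ⟨Q, hQ, hlim⟩ := μ.exists_isFixedPt_tendsto_birkhoffAverage hbounded
  let trace : HermMat n →+ ℂ :=
    (Matrix.traceAddMonoidHom (Fin n) ℂ).comp (selfAdjoint (Matrix (Fin n) (Fin n) ℂ)).subtype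
  have htrace : trace Q = trace P :=
    map_eq_of_tendsto_birkhoffAverage trace continuous_subtype_val.matrix_trace
      (funext hMarkov) hlim
  refine ⟨Q, ?_, htrace.trans hP, hQ⟩
  rw [funext (μ.birkhoffAverage_id_apply · P)] at hlim
  exact hlim
end
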